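/- The vertex operators satisfy the quasi-commutation relations: Γ_{a₁+}(x₁) Γ_{a₂-}(x₂) = (1-x₁x₂)^{-1} Γ_{a₂-}(x₂) Γ_{a₁+}(x₁) when a₁ = a₂, and Γ_{a₁+}(x₁) Γ_{a₂-}(x₂) = (1+x₁x₂) Γ_{a₂-}(x₂) Γ_{a₁+}(x₁) when a₁ ≠ a₂, as identities of operators on the bosonic Fock space with formal-power-series coefficients. -/

import Mathlib

open scoped Classical

/-- An integer partition: a nonincreasing sequence of nonnegative integers, eventually zero. -/
structure IntPartition where
  f : ℕ → ℕ
  antitone : ∀ i j : ℕ, i ≤ j → f j ≤ f i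
  eventually_zero : ∃ N : ℕ, ∀ n : ℕ, N ≤ n → f n = 0

/-- `InterF f g` means `f ≻ g`, i.e. `f 0 ≥ g 0 ≥ f 1 ≥ g 1 ≥ ⋯` (0-indexed). -/
def InterF (f g : ℕ → ℕ) : Prop := ∀ i : ℕ, g i ≤ f i ∧ f (i + 1) ≤ g i

/-- `conjF f i` is the `(i+1)`-st part of the conjugate partition: the number of `j` with `f j ≥ i+1`. -/
noncomputable def conjF (f : ℕ → ℕ) (i : ℕ) : ℕ := Set.ncard {j : ℕ | i + 1 ≤ f j}

/-- The size `|f| = Σ f i` of a partition. -/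
noncomputable def sizeF (f : ℕ → ℕ) : ℕ := ∑ᶠ i : ℕ, f i

/-- The empty partition. -/
def emptyP : IntPartition := ⟨fun _ => 0, fun _ _ _ => le_rfl, ⟨0, fun _ _ => rfl⟩⟩

/-- `Prec a μ λ` means `μ ≺ λ` in type `a`: for `a = true` (type `L`), `λ/μ` is a horizontal
strip (`λ ≻ μ`); for `a = false` (type `R`), `λ'/μ'` is a horizontal strip. -/
def Prec (a : Bool) (mu lam : IntPartition) : Prop :=
  if a then InterF lam.f mu.f else InterF (conjF lam.f) (conjF mu.f)

/-!
Every constraint on the intermediate partitions is a row-by-row condition, so both sides count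
lattice points in products of intervals. Conjugation exchanges the types `L` and `R`, which
reduces the theorem to `a₁ = L`.

For `a₂ = L`, a partition `ν ≻ κ, μ` is given by `ν₀ = max(κ₀, μ₀) + j` together with rows
`ν_{i+1}` in the interval `[max(κ_{i+1}, μ_{i+1}), min(κ_i, μ_i)]`, which is also the range of the
row `ρ_i` of a partition `ρ ≺ κ, μ`. Reflecting each row in its interval is a bijection with
`|ν| + |ρ| = |κ| + |μ| + j`; summing over `j` gives the factor `(1 - x₁x₂)⁻¹`.

For `a₂ = R`, the partitions are `ν = μ + 1_S` and `ρ = κ - 1_T` with `F ⊆ S ⊆ U` and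
`F ⊆ T ⊆ D`, where `F` is the set of forced rows and `U = {0} ∪ (D + 1)`, so `|U| = |D| + 1`.
Pascal's rule `C(n+1, k) = C(n, k) + C(n, k-1)` gives the factor `1 + x₁x₂`; when `p` or `q`
vanishes, both sides count a single candidate partition.
-/

open Finset Function

section SizeF

variable {f g : ℕ → ℕ}

theorem sizeF_eq_sum_range {N : ℕ} (h : ∀ n, N ≤ n → f n = 0) :
    sizeF f = ∑ i ∈ range N, f i :=
  finsum_eq_sum_of_support_subset f fun i hi => by simpa using not_le.mp (mt (h i) hi)

theorem Function.HasFiniteSupport.exists_eq_zero (hf : f.HasFiniteSupport) :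
    ∃ N, ∀ n, N ≤ n → f n = 0 := by
  obtain ⟨b, hb⟩ := hf.bddAbove
  exact ⟨b + 1, fun n hn => by_contra fun h => by have := hb h; omega⟩

theorem sizeF_add (hf : f.HasFiniteSupport) (hg : g.HasFiniteSupport) :
    sizeF (fun i => f i + g i) = sizeF f + sizeF g :=
  finsum_add_distrib hf hg

theorem le_sizeF (hf : f.HasFiniteSupport) (i : ℕ) : f i ≤ sizeF f :=
  single_le_finsum i hf fun _ => Nat.zero_le _

theorem sizeF_eq_add_sizeF_succ (hf : f.HasFiniteSupport) :
    sizeF f = f 0 + sizeF (fun i => f (i + 1)) := by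
  obtain ⟨N, hN⟩ := hf.exists_eq_zero
  rw [sizeF_eq_sum_range (N := N + 1) fun n hn => hN n (by omega),
    sizeF_eq_sum_range (N := N) fun n hn => hN (n + 1) (by omega), sum_range_succ', add_comm]

theorem sizeF_add_sizeF_of_succ_add_eq {a b : ℕ → ℕ} (hf : f.HasFiniteSupport)
    (hg : g.HasFiniteSupport) (ha : a.HasFiniteSupport) (hb : b.HasFiniteSupport)
    (h : ∀ i, f (i + 1) + g i = a i + b (i + 1)) :
    sizeF f + sizeF g + b 0 = sizeF a + sizeF b + f 0 := by
  have hshift : ∀ {u : ℕ → ℕ}, u.HasFiniteSupport → (fun i => u (i + 1)).HasFiniteSupport :=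
    fun hu => hu.comp_of_injective (add_left_injective 1)
  have := sizeF_add (hshift hf) hg
  rw [funext h, sizeF_add ha (hshift hb)] at this
  rw [sizeF_eq_add_sizeF_succ hf, sizeF_eq_add_sizeF_succ hb]
  omega

theorem sizeF_add_sub_le (hg : g.HasFiniteSupport) (hfg : ∀ i, f i ≤ g i) (i : ℕ) :
    sizeF f + (g i - f i) ≤ sizeF g := by
  have hf : f.HasFiniteSupport := hg.subset fun j hj => by
    have := hfg j; simp only [mem_support] at hj ⊢; omega
  have hsub : (fun j => g j - f j).HasFiniteSupport := hg.subset fun j hj => by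
    simp only [mem_support] at hj ⊢; omega
  have hsplit : sizeF g = sizeF f + sizeF (fun j => g j - f j) := by
    rw [← sizeF_add hf hsub]; congr 1; funext j; have := hfg j; omega
  have := le_sizeF hsub i
  omega

theorem eq_of_le_of_sizeF_eq (hg : g.HasFiniteSupport) (hfg : ∀ i, f i ≤ g i)
    (h : sizeF f = sizeF g) : f = g :=
  funext fun i => by have := sizeF_add_sub_le hg hfg i; have := hfg i; omega

theorem sizeF_eq_sizeF_add_card {N : ℕ} (hg : ∀ n, N ≤ n → g n = 0)
    (hfg : ∀ i, f i ≤ g i ∧ g i ≤ f i + 1) : sizeF g = sizeF f + #{i ∈ range N | f i < g i} := by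
  have hf : ∀ n, N ≤ n → f n = 0 := fun n hn => by have := hfg n; have := hg n hn; omega
  rw [sizeF_eq_sum_range hg, sizeF_eq_sum_range hf, card_filter, ← sum_add_distrib]
  exact sum_congr rfl fun i _ => by have := hfg i; split_ifs <;> omega

theorem eq_add_ite_mem_filter {N : ℕ} (hg : ∀ n, N ≤ n → g n = 0)
    (hfg : ∀ i, f i ≤ g i ∧ g i ≤ f i + 1) (i : ℕ) :
    g i = f i + if i ∈ {i ∈ range N | f i < g i} then 1 else 0 := by
  have := hfg i
  by_cases hi : i < N
  · simp only [mem_filter, mem_range, hi, true_and]; split_ifs <;> omega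
  · have := hg i (not_lt.mp hi); simp only [mem_filter, mem_range, hi, false_and, if_false]; omega

theorem filter_lt_eq_of_eq_add_ite {N : ℕ} {S : Finset ℕ} (hS : S ⊆ range N)
    (hfg : ∀ i, g i = f i + if i ∈ S then 1 else 0) : {i ∈ range N | f i < g i} = S := by
  ext i
  by_cases hi : i ∈ S
  · simp [hfg, hi, hS hi]
  · simp [hfg, hi]

end SizeF

namespace IntPartition

theorem f_injective : Injective IntPartition.f := by
  rintro ⟨f, _, _⟩ ⟨g, _, _⟩ rfl; rfl

theorem hasFiniteSupport (ν : IntPartition) : ν.f.HasFiniteSupport := by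
  obtain ⟨N, hN⟩ := ν.eventually_zero
  exact (Set.finite_Iio N).subset fun n hn => not_le.mp (mt (hN n) hn)

def ofSuccLE (f : ℕ → ℕ) (hf : ∀ i, f (i + 1) ≤ f i) (N : ℕ) (hN : ∀ n, N ≤ n → f n = 0) :
    IntPartition :=
  ⟨f, fun _ _ h => antitone_nat_of_succ_le hf h, N, hN⟩

theorem succ_mul_le_sizeF (ν : IntPartition) (i : ℕ) : (i + 1) * ν.f i ≤ sizeF ν.f := by
  obtain ⟨N, hN⟩ := ν.eventually_zero
  calc (i + 1) * ν.f i = #(range (i + 1)) • ν.f i := by simp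
    _ ≤ ∑ k ∈ range (i + 1), ν.f k :=
      card_nsmul_le_sum _ _ _ fun k hk => ν.antitone k i (Nat.lt_succ_iff.mp (mem_range.mp hk))
    _ ≤ ∑ k ∈ range (max N (i + 1)), ν.f k :=
      sum_le_sum_of_subset (range_subset_range.mpr (le_max_right _ _))
    _ = sizeF ν.f := (sizeF_eq_sum_range fun n hn => hN n (le_of_max_le_left hn)).symm

theorem eq_zero_of_sizeF_le (ν : IntPartition) {i : ℕ} (hi : sizeF ν.f ≤ i) : ν.f i = 0 := by
  have := ν.succ_mul_le_sizeF i
  by_contra h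
  nlinarith [Nat.one_le_iff_ne_zero.mpr h]

theorem finite_setOf_sizeF_eq (n : ℕ) : {ν : IntPartition | sizeF ν.f = n}.Finite := by
  refine Set.Finite.of_finite_image (f := fun ν (i : Fin n) => ν.f i)
    ((Set.Finite.pi (t := fun _ => Set.Iic n) fun _ => Set.finite_Iic n).subset ?_) ?_
  · rintro _ ⟨ν, rfl, rfl⟩ i -
    exact le_sizeF ν.hasFiniteSupport i
  · intro ν (hν : sizeF ν.f = n) ν' (hν' : sizeF ν'.f = n) h
    refine f_injective (funext fun i => ?_)
    by_cases hi : i < n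
    · exact congrFun h ⟨i, hi⟩
    · rw [ν.eq_zero_of_sizeF_le (by omega), ν'.eq_zero_of_sizeF_le (by omega)]

theorem lt_conjF_iff (ν : IntPartition) {i j : ℕ} : j < conjF ν.f i ↔ i < ν.f j := by
  refine ⟨fun h => not_le.mp fun hj => ?_, fun h => ?_⟩
  · have hsub : {k | i + 1 ≤ ν.f k} ⊆ Set.Iio j := fun k (hk : i + 1 ≤ ν.f k) =>
      lt_of_not_ge fun hjk => by have := ν.antitone j k hjk; omega
    have := Set.ncard_le_ncard hsub (Set.finite_Iio j)
    rw [Set.ncard_Iio_nat] at this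
    exact (h.trans_le this).false
  · have hfin : {k | i + 1 ≤ ν.f k}.Finite := ν.hasFiniteSupport.subset fun k hk => by
      simp only [Set.mem_ofPred_eq, mem_support] at hk ⊢; omega
    have hsub : Set.Iio (j + 1) ⊆ {k | i + 1 ≤ ν.f k} := fun k hk =>
      (ν.antitone k j (Nat.lt_succ_iff.mp hk)).trans' h
    have := Set.ncard_le_ncard hsub hfin
    rwa [Set.ncard_Iio_nat] at this

noncomputable def conj (ν : IntPartition) : IntPartition where
  f := conjF ν.f
  antitone i i' h := le_of_forall_lt fun j hj => by
    rw [lt_conjF_iff] at hj ⊢; exact lt_of_le_of_lt h hj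
  eventually_zero := ⟨ν.f 0, fun n hn => Nat.eq_zero_of_not_pos fun h => by
    rw [lt_conjF_iff] at h; omega⟩

theorem conj_f (ν : IntPartition) : ν.conj.f = conjF ν.f := rfl

theorem lt_conj_iff (ν : IntPartition) {i j : ℕ} : j < ν.conj.f i ↔ i < ν.f j :=
  ν.lt_conjF_iff

theorem conj_conj (ν : IntPartition) : ν.conj.conj = ν :=
  f_injective <| funext fun j => eq_of_forall_lt_iff fun i => by rw [lt_conj_iff, lt_conj_iff]

theorem conj_involutive : Involutive conj := conj_conj

theorem sizeF_conj (ν : IntPartition) : sizeF ν.conj.f = sizeF ν.f := by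
  obtain ⟨n, hn⟩ : ∃ n, sizeF ν.f = n := ⟨_, rfl⟩
  have hν : ∀ j, n ≤ j → ν.f j = 0 := fun j hj => ν.eq_zero_of_sizeF_le (hn ▸ hj)
  have hle : ∀ j, ν.f j ≤ n := hn ▸ le_sizeF ν.hasFiniteSupport
  have hconj : ∀ i, ν.conj.f i ≤ n := fun i => not_lt.mp fun h => by
    rw [lt_conj_iff, hν n le_rfl] at h; omega
  have hconj_zero : ∀ i, n ≤ i → ν.conj.f i = 0 := fun i hi =>
    Nat.eq_zero_of_not_pos fun h => by rw [lt_conj_iff] at h; have := hle 0; omega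
  have hcard : ∀ c ≤ n, #{k ∈ range n | k < c} = c := fun c hc => by
    rw [show {k ∈ range n | k < c} = range c by ext; simp; omega, card_range]
  rw [sizeF_eq_sum_range hconj_zero, sizeF_eq_sum_range hν]
  calc ∑ i ∈ range n, ν.conj.f i = ∑ i ∈ range n, #{j ∈ range n | i < ν.f j} :=
        sum_congr rfl fun i _ => by rw [← hcard _ (hconj i)]; simp only [lt_conj_iff]
    _ = ∑ j ∈ range n, #{i ∈ range n | i < ν.f j} := by simp only [card_filter]; exact sum_comm
    _ = ∑ j ∈ range n, ν.f j := sum_congr rfl fun j _ => hcard _ (hle j)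

end IntPartition

open IntPartition

theorem prec_true_iff {μ ν : IntPartition} :
    Prec true μ ν ↔ ∀ i, μ.f i ≤ ν.f i ∧ ν.f (i + 1) ≤ μ.f i := Iff.rfl

theorem prec_false_iff {μ ν : IntPartition} :
    Prec false μ ν ↔ ∀ i, μ.f i ≤ ν.f i ∧ ν.f i ≤ μ.f i + 1 := by
  have hle : (∀ i, conjF μ.f i ≤ conjF ν.f i) ↔ ∀ j, μ.f j ≤ ν.f j := by
    simp only [← forall_lt_iff_le, lt_conjF_iff]; exact forall_comm
  have hle' : (∀ i, conjF ν.f (i + 1) ≤ conjF μ.f i) ↔ ∀ j, ν.f j ≤ μ.f j + 1 := by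
    conv_lhs => simp only [← forall_lt_iff_le, lt_conjF_iff]
    rw [forall_comm]
    exact forall_congr' fun j =>
      ⟨fun h => not_lt.mp fun hj => (h (μ.f j) hj).false, fun h i hi => by omega⟩
  simp only [Prec, InterF, Bool.false_eq_true, if_false, forall_and, hle, hle']

theorem prec_conj {a : Bool} {μ ν : IntPartition} : Prec a μ.conj ν.conj ↔ Prec (!a) μ ν := by
  cases a
  · change InterF (conjF ν.conj.f) (conjF μ.conj.f) ↔ InterF ν.f μ.f
    rw [← conj_f, ← conj_f, conj_conj, conj_conj]
  · exact Iff.rfl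

theorem prec_refl (a : Bool) (μ : IntPartition) : Prec a μ μ := by
  cases a
  · exact fun i => ⟨le_rfl, μ.conj.antitone i (i + 1) (Nat.le_succ i)⟩
  · exact fun i => ⟨le_rfl, μ.antitone i (i + 1) (Nat.le_succ i)⟩

/-- The coefficient of `x₁^p x₂^q` in `⟨κ| Γ_{a₁+}(x₁) Γ_{a₂-}(x₂) |μ⟩`. -/
noncomputable def plusMinusCoeff (a₁ a₂ : Bool) (κ μ : IntPartition) (p q : ℕ) : ℕ :=
  {ν : IntPartition | Prec a₁ κ ν ∧ Prec a₂ μ ν ∧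
    sizeF ν.f = sizeF κ.f + p ∧ sizeF ν.f = sizeF μ.f + q}.ncard

/-- The coefficient of `x₁^p x₂^q` in `⟨κ| Γ_{a₂-}(x₂) Γ_{a₁+}(x₁) |μ⟩`. -/
noncomputable def minusPlusCoeff (a₁ a₂ : Bool) (κ μ : IntPartition) (p q : ℕ) : ℕ :=
  {ρ : IntPartition | Prec a₁ ρ μ ∧ Prec a₂ ρ κ ∧
    sizeF μ.f = sizeF ρ.f + p ∧ sizeF κ.f = sizeF ρ.f + q}.ncard

section Coefficients

variable (a₁ a₂ : Bool) (κ μ : IntPartition) (p q : ℕ)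

theorem plusMinusCoeff_conj :
    plusMinusCoeff a₁ a₂ κ.conj μ.conj p q = plusMinusCoeff (!a₁) (!a₂) κ μ p q := by
  rw [plusMinusCoeff, ← Set.ncard_preimage_of_injective_subset_range conj_involutive.injective
    (by simp [conj_involutive.surjective.range_eq])]
  simp only [Set.preimage_ofPred_eq, prec_conj, sizeF_conj]
  rfl

theorem minusPlusCoeff_conj :
    minusPlusCoeff a₁ a₂ κ.conj μ.conj p q = minusPlusCoeff (!a₁) (!a₂) κ μ p q := by
  rw [minusPlusCoeff, ← Set.ncard_preimage_of_injective_subset_range conj_involutive.injective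
    (by simp [conj_involutive.surjective.range_eq])]
  simp only [Set.preimage_ofPred_eq, prec_conj, sizeF_conj]
  rfl

variable {κ μ p q}

theorem plusMinusCoeff_eq_zero (hC : sizeF μ.f + q ≠ sizeF κ.f + p) :
    plusMinusCoeff a₁ a₂ κ μ p q = 0 := by
  rw [plusMinusCoeff]
  convert Set.ncard_empty IntPartition
  exact Set.eq_empty_of_forall_notMem fun ν ⟨_, _, h₁, h₂⟩ => hC (by omega)

theorem minusPlusCoeff_eq_zero (hC : sizeF μ.f + q ≠ sizeF κ.f + p) :
    minusPlusCoeff a₁ a₂ κ μ p q = 0 := by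
  rw [minusPlusCoeff]
  convert Set.ncard_empty IntPartition
  exact Set.eq_empty_of_forall_notMem fun ρ ⟨_, _, h₁, h₂⟩ => hC (by omega)

end Coefficients

section EqualType

variable {κ μ : IntPartition}

theorem prec_true_upper_iff {ν : IntPartition} :
    Prec true κ ν ∧ Prec true μ ν ↔
      ∀ i, max (κ.f i) (μ.f i) ≤ ν.f i ∧ ν.f (i + 1) ≤ min (κ.f i) (μ.f i) := by
  simp only [prec_true_iff, max_le_iff, le_min_iff, ← forall_and]
  exact forall_congr' fun i => by tauto

theorem prec_true_lower_iff {ρ : IntPartition} :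
    Prec true ρ μ ∧ Prec true ρ κ ↔
      ∀ i, ρ.f i ≤ min (κ.f i) (μ.f i) ∧ max (κ.f (i + 1)) (μ.f (i + 1)) ≤ ρ.f i := by
  simp only [prec_true_iff, max_le_iff, le_min_iff, ← forall_and]
  exact forall_congr' fun i => by tauto

theorem sizeF_add_sizeF_of_reflect {ν ρ : IntPartition}
    (h : ∀ i, ν.f (i + 1) + ρ.f i = min (κ.f i) (μ.f i) + max (κ.f (i + 1)) (μ.f (i + 1))) :
    sizeF ν.f + sizeF ρ.f + max (κ.f 0) (μ.f 0) = sizeF κ.f + sizeF μ.f + ν.f 0 := by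
  have hκ := κ.hasFiniteSupport
  have hμ := μ.hasFiniteSupport
  have := sizeF_add_sizeF_of_succ_add_eq ν.hasFiniteSupport ρ.hasFiniteSupport
    (hκ.min hμ) (hκ.max hμ) h
  rw [← sizeF_add hκ hμ, ← funext fun i => min_add_max (κ.f i) (μ.f i), sizeF_add (hκ.min hμ)
    (hκ.max hμ)]
  exact this

theorem exists_upper_of_reflect {ρ : IntPartition} (hρμ : Prec true ρ μ) (hρκ : Prec true ρ κ)
    (j : ℕ) : ∃ ν : IntPartition, Prec true κ ν ∧ Prec true μ ν ∧
      ν.f 0 = max (κ.f 0) (μ.f 0) + j ∧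
      ∀ i, ν.f (i + 1) + ρ.f i = min (κ.f i) (μ.f i) + max (κ.f (i + 1)) (μ.f (i + 1)) := by
  have hb := prec_true_lower_iff.mp ⟨hρμ, hρκ⟩
  let g : ℕ → ℕ := fun
    | 0 => max (κ.f 0) (μ.f 0) + j
    | i + 1 => min (κ.f i) (μ.f i) + max (κ.f (i + 1)) (μ.f (i + 1)) - ρ.f i
  have hg : ∀ i, max (κ.f i) (μ.f i) ≤ g i ∧ g (i + 1) ≤ min (κ.f i) (μ.f i) := by
    rintro (_ | i)
    · have := hb 0; dsimp only [g]; omega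
    · have := hb i; have := hb (i + 1); dsimp only [g]; omega
  have hzero : ∀ n, sizeF κ.f + sizeF μ.f + 1 ≤ n → g n = 0 := by
    rintro (_ | k) hk
    · omega
    · have := κ.eq_zero_of_sizeF_le (i := k) (by omega)
      have := μ.eq_zero_of_sizeF_le (i := k) (by omega)
      have := κ.eq_zero_of_sizeF_le (i := k + 1) (by omega)
      have := μ.eq_zero_of_sizeF_le (i := k + 1) (by omega)
      dsimp only [g]; omega
  let ν := ofSuccLE g (fun i => (hg i).2.trans (min_le_max.trans (hg i).1)) _ hzero
  obtain ⟨hκν, hμν⟩ := (prec_true_upper_iff (ν := ν)).mpr hg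
  exact ⟨ν, hκν, hμν, rfl, fun i => by have := hb i; dsimp only [ν, ofSuccLE, g]; omega⟩

theorem exists_lower_of_reflect {ν : IntPartition} (hκν : Prec true κ ν) (hμν : Prec true μ ν) :
    ∃ ρ : IntPartition, Prec true ρ μ ∧ Prec true ρ κ ∧
      ∀ i, ν.f (i + 1) + ρ.f i = min (κ.f i) (μ.f i) + max (κ.f (i + 1)) (μ.f (i + 1)) := by
  have hb := prec_true_upper_iff.mp ⟨hκν, hμν⟩
  let g (i : ℕ) : ℕ := min (κ.f i) (μ.f i) + max (κ.f (i + 1)) (μ.f (i + 1)) - ν.f (i + 1)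
  have hg : ∀ i, g i ≤ min (κ.f i) (μ.f i) ∧ max (κ.f (i + 1)) (μ.f (i + 1)) ≤ g i := fun i => by
    have := hb i; have := hb (i + 1); dsimp only [g]; omega
  have hzero : ∀ n, sizeF κ.f + sizeF μ.f ≤ n → g n = 0 := fun n hn => by
    have := hg n
    have := κ.eq_zero_of_sizeF_le (i := n) (by omega)
    have := μ.eq_zero_of_sizeF_le (i := n) (by omega)
    omega
  let ρ := ofSuccLE g (fun i => (hg (i + 1)).1.trans (min_le_max.trans (hg i).2)) _ hzero
  obtain ⟨hρμ, hρκ⟩ := (prec_true_lower_iff (ρ := ρ)).mpr hg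
  exact ⟨ρ, hρμ, hρκ, fun i => by have := hb i; dsimp only [ρ, ofSuccLE, g]; omega⟩

/-- The rows `ν_{i+1}` and `ρ_i` both range over `[max(κ_{i+1}, μ_{i+1}), min(κ_i, μ_i)]`, and
`ν ↦ ρ` reflects each row in its interval. -/
theorem ncard_fiber_eq_minusPlusCoeff {p q j : ℕ} (hjp : j ≤ p) (hjq : j ≤ q) :
    {ν : IntPartition | (Prec true κ ν ∧ Prec true μ ν ∧
      sizeF ν.f = sizeF κ.f + p ∧ sizeF ν.f = sizeF μ.f + q) ∧
        ν.f 0 = max (κ.f 0) (μ.f 0) + j}.ncard =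
      minusPlusCoeff true true κ μ (p - j) (q - j) := by
  rw [minusPlusCoeff]
  refine Set.ncard_congr (fun ν hν => (exists_lower_of_reflect hν.1.1 hν.1.2.1).choose)
    ?_ ?_ ?_
  · rintro ν ⟨⟨hκν, hμν, hp, hq⟩, h0⟩
    obtain ⟨hρμ, hρκ, hρ⟩ := (exists_lower_of_reflect hκν hμν).choose_spec
    have := sizeF_add_sizeF_of_reflect hρ
    exact ⟨hρμ, hρκ, by omega, by omega⟩
  · intro ν ν' hν hν' h
    have hρ := (exists_lower_of_reflect hν.1.1 hν.1.2.1).choose_spec.2.2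
    have hρ' := (exists_lower_of_reflect hν'.1.1 hν'.1.2.1).choose_spec.2.2
    have h0 := hν.2
    have h0' := hν'.2
    rw [h] at hρ
    refine f_injective (funext fun i => ?_)
    cases i with
    | zero => omega
    | succ i => have := hρ i; have := hρ' i; omega
  · rintro ρ ⟨hρμ, hρκ, hp, hq⟩
    obtain ⟨ν, hκν, hμν, h0, hν⟩ := exists_upper_of_reflect hρμ hρκ j
    have hsize := sizeF_add_sizeF_of_reflect hν
    refine ⟨ν, ⟨⟨hκν, hμν, by omega, by omega⟩, h0⟩, f_injective (funext fun i => ?_)⟩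
    have := (exists_lower_of_reflect hκν hμν).choose_spec.2.2 i
    have := hν i
    omega

theorem plusMinusCoeff_true_true (κ μ : IntPartition) (p q : ℕ) :
    plusMinusCoeff true true κ μ p q =
      ∑ j ∈ range (min p q + 1), minusPlusCoeff true true κ μ (p - j) (q - j) := by
  rw [plusMinusCoeff]
  set L := {ν : IntPartition | Prec true κ ν ∧ Prec true μ ν ∧
    sizeF ν.f = sizeF κ.f + p ∧ sizeF ν.f = sizeF μ.f + q}
  have hcover : L = ⋃ j ∈ (range (min p q + 1) : Set ℕ),
      {ν | ν ∈ L ∧ ν.f 0 = max (κ.f 0) (μ.f 0) + j} := by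
    ext ν
    simp only [Set.mem_iUnion, coe_range, Set.mem_Iio, Set.mem_ofPred_eq, exists_prop]
    refine ⟨fun hν => ?_, fun ⟨_, _, hν, _⟩ => hν⟩
    obtain ⟨hκν, hμν, hp, hq⟩ := hν
    have := sizeF_add_sub_le ν.hasFiniteSupport (fun i => (hκν i).1) 0
    have := sizeF_add_sub_le ν.hasFiniteSupport (fun i => (hμν i).1) 0
    have := (hκν 0).1; have := (hμν 0).1
    exact ⟨ν.f 0 - max (κ.f 0) (μ.f 0), by omega, ⟨hκν, hμν, hp, hq⟩, by omega⟩
  have hdisj : (range (min p q + 1) : Set ℕ).PairwiseDisjoint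
      fun j => {ν | ν ∈ L ∧ ν.f 0 = max (κ.f 0) (μ.f 0) + j} := fun i _ j _ hij =>
    Set.disjoint_left.mpr fun ν hi hj => hij (by have := hi.2; have := hj.2; omega)
  rw [hcover, Set.Finite.ncard_biUnion (finite_toSet _)
    (fun j _ => (finite_setOf_sizeF_eq (sizeF κ.f + p)).subset fun ν hν => hν.1.2.2.1) hdisj,
    finsum_mem_coe_finset]
  exact sum_congr rfl fun j hj => by
    have := mem_range.mp hj
    exact ncard_fiber_eq_minusPlusCoeff (by omega) (by omega)

end EqualType

section Supersets

variable {α : Type*} [DecidableEq α] {F X Y : Finset α}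

theorem card_supersets_eq (hFX : F ⊆ X) (q : ℕ) :
    #{S ∈ X.powerset | F ⊆ S ∧ #S = q} = if #F ≤ q then (#X - #F).choose (q - #F) else 0 := by
  split_ifs with hq
  · rw [← card_sdiff_of_subset hFX, ← card_powersetCard]
    refine card_nbij' (· \ F) (· ∪ F) ?_ ?_ ?_ ?_
    · intro S hS
      simp only [coe_filter, mem_powerset, Set.mem_ofPred_eq, mem_coe, mem_powersetCard] at hS ⊢
      exact ⟨sdiff_subset_sdiff hS.1 le_rfl, by rw [card_sdiff_of_subset hS.2.1, hS.2.2]⟩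
    · intro T hT
      simp only [coe_filter, mem_powerset, Set.mem_ofPred_eq, mem_coe, mem_powersetCard] at hT ⊢
      have hdisj : Disjoint T F := disjoint_of_subset_left hT.1 sdiff_disjoint
      refine ⟨union_subset (hT.1.trans sdiff_subset) hFX, subset_union_right, ?_⟩
      rw [card_union_of_disjoint hdisj, hT.2]; omega
    · intro S hS
      simp only [coe_filter, mem_powerset, Set.mem_ofPred_eq] at hS
      exact sdiff_union_of_subset hS.2.1
    · intro T hT
      simp only [mem_coe, mem_powersetCard] at hT
      exact union_sdiff_cancel_right (disjoint_of_subset_left hT.1 sdiff_disjoint)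
  · refine card_eq_zero.mpr (filter_eq_empty_iff.mpr fun S _ ⟨hFS, hS⟩ => hq ?_)
    exact hS ▸ card_le_card hFS

theorem card_supersets_eq_add (hFX : F ⊆ X) (hFY : F ⊆ Y) (hXY : #X = #Y + 1) {q : ℕ}
    (hq : q ≠ 0) :
    #{S ∈ X.powerset | F ⊆ S ∧ #S = q} =
      #{S ∈ Y.powerset | F ⊆ S ∧ #S = q} + #{S ∈ Y.powerset | F ⊆ S ∧ #S = q - 1} := by
  have := card_le_card hFY
  simp only [card_supersets_eq hFX, card_supersets_eq hFY]
  rcases lt_trichotomy (#F) q with h | h | h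
  · obtain ⟨k, rfl⟩ : ∃ k, q = #F + k + 1 := ⟨q - #F - 1, by omega⟩
    rw [if_pos (by omega), if_pos (by omega), if_pos (by omega),
      show #X - #F = #Y - #F + 1 by omega, show #F + k + 1 - #F = k + 1 by omega,
      show #F + k + 1 - 1 - #F = k by omega, Nat.choose_succ_succ', add_comm]
  · subst h; simp [show ¬ #F ≤ #F - 1 by omega]
  · simp [show ¬ #F ≤ q by omega, show ¬ #F ≤ q - 1 by omega]

end Supersets

theorem Set.ncard_eq_ncard_of_subset_singleton {α β : Type*} {s : Set α} {t : Set β} {a : α}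
    {b : β} (hs : s ⊆ {a}) (ht : t ⊆ {b}) (h : a ∈ s ↔ b ∈ t) : s.ncard = t.ncard := by
  rcases Set.subset_singleton_iff_eq.mp hs with rfl | rfl <;>
    rcases Set.subset_singleton_iff_eq.mp ht with rfl | rfl <;> simp_all

section MixedType

variable (κ μ : IntPartition)

/-- For `a₁ = L`, `a₂ = R` the partitions are `ν = μ + 1_S` with
`forcedRows κ μ ⊆ S ⊆ upperRows κ μ` and `ρ = κ - 1_T` with `forcedRows κ μ ⊆ T ⊆ lowerRows κ μ`.
All rows from `|κ| + |μ|` on are empty. -/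
noncomputable def forcedRows : Finset ℕ :=
  {i ∈ range (sizeF κ.f + sizeF μ.f) | μ.f i < κ.f i}

noncomputable def lowerRows : Finset ℕ :=
  {i ∈ range (sizeF κ.f + sizeF μ.f) | μ.f (i + 1) < κ.f i}

noncomputable def upperRows : Finset ℕ :=
  insert 0 ((lowerRows κ μ).image (· + 1))

theorem zero_mem_upperRows : 0 ∈ upperRows κ μ := mem_insert_self _ _

theorem succ_mem_upperRows {k : ℕ} : k + 1 ∈ upperRows κ μ ↔ k ∈ lowerRows κ μ := by
  simp [upperRows]

theorem card_upperRows : #(upperRows κ μ) = #(lowerRows κ μ) + 1 := by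
  rw [upperRows, card_insert_of_notMem (by simp), card_image_of_injective _ (add_left_injective 1)]

theorem upperRows_subset_range : upperRows κ μ ⊆ range (sizeF κ.f + sizeF μ.f + 1) := by
  rintro (_ | k) hk
  · simp
  · have := (mem_filter.mp ((succ_mem_upperRows κ μ).mp hk)).1
    simp only [mem_range] at this ⊢; omega

theorem forcedRows_subset_lowerRows : forcedRows κ μ ⊆ lowerRows κ μ := by
  intro i hi
  simp only [forcedRows, lowerRows, mem_filter] at hi ⊢
  exact ⟨hi.1, (μ.antitone i (i + 1) (Nat.le_succ i)).trans_lt hi.2⟩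

theorem forcedRows_subset_upperRows : forcedRows κ μ ⊆ upperRows κ μ := by
  rintro (_ | k) hk
  · exact zero_mem_upperRows κ μ
  · simp only [forcedRows, mem_filter, mem_range] at hk
    simp only [succ_mem_upperRows, lowerRows, mem_filter, mem_range]
    exact ⟨by omega, hk.2.trans_le (κ.antitone k (k + 1) (Nat.le_succ k))⟩

variable {κ μ}

theorem compatible_of_upper {ν : IntPartition} (hκν : Prec true κ ν) (hμν : Prec false μ ν)
    (i : ℕ) : μ.f (i + 1) ≤ κ.f i ∧ κ.f i ≤ μ.f i + 1 := by
  rw [prec_false_iff] at hμν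
  have := hκν i; have := hμν i; have := hμν (i + 1); omega

theorem compatible_of_lower {ρ : IntPartition} (hρμ : Prec true ρ μ) (hρκ : Prec false ρ κ)
    (i : ℕ) : μ.f (i + 1) ≤ κ.f i ∧ κ.f i ≤ μ.f i + 1 := by
  rw [prec_false_iff] at hρκ
  have := hρμ i; have := hρκ i; omega

theorem exists_upper_of_subset (hG : ∀ i, μ.f (i + 1) ≤ κ.f i ∧ κ.f i ≤ μ.f i + 1)
    {S : Finset ℕ} (hSX : S ⊆ upperRows κ μ) (hFS : forcedRows κ μ ⊆ S) :
    ∃ ν : IntPartition, Prec true κ ν ∧ ∀ i, ν.f i = μ.f i + if i ∈ S then 1 else 0 := by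
  set N := sizeF κ.f + sizeF μ.f
  have hκ : ∀ n, N ≤ n → κ.f n = 0 := fun n hn => κ.eq_zero_of_sizeF_le (by omega)
  let g (i : ℕ) : ℕ := μ.f i + if i ∈ S then 1 else 0
  have hg : ∀ i, κ.f i ≤ g i ∧ g (i + 1) ≤ κ.f i := fun i => by
    constructor
    · by_cases hi : i ∈ S
      · have := (hG i).2; simp only [g, hi, if_true]; omega
      · have : ¬ (i < N ∧ μ.f i < κ.f i) := fun h => hi (hFS (by simpa [forcedRows] using h))
        have := hκ i
        simp only [g, hi, if_false]; omega
    · by_cases hi : i + 1 ∈ S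
      · have := (mem_filter.mp ((succ_mem_upperRows κ μ).mp (hSX hi))).2
        simp only [g, hi, if_true]; omega
      · have := (hG i).1; simp only [g, hi, if_false]; omega
  have hzero : ∀ n, N + 1 ≤ n → g n = 0 := fun n hn => by
    have : n ∉ S := fun h => by have := mem_range.mp (upperRows_subset_range κ μ (hSX h)); omega
    simp only [g, this, if_false, μ.eq_zero_of_sizeF_le (i := n) (by omega)]
  exact ⟨ofSuccLE g (fun i => (hg i).2.trans (hg i).1) _ hzero, hg, fun _ => rfl⟩

theorem exists_lower_of_subset (hG : ∀ i, μ.f (i + 1) ≤ κ.f i ∧ κ.f i ≤ μ.f i + 1)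
    {S : Finset ℕ} (hSY : S ⊆ lowerRows κ μ) (hFS : forcedRows κ μ ⊆ S) :
    ∃ ρ : IntPartition, Prec true ρ μ ∧ ∀ i, κ.f i = ρ.f i + if i ∈ S then 1 else 0 := by
  set N := sizeF κ.f + sizeF μ.f
  have hκ : ∀ n, N ≤ n → κ.f n = 0 := fun n hn => κ.eq_zero_of_sizeF_le (by omega)
  have hpos : ∀ i ∈ S, μ.f (i + 1) < κ.f i := fun i hi => (mem_filter.mp (hSY hi)).2
  let g (i : ℕ) : ℕ := κ.f i - if i ∈ S then 1 else 0
  have hg : ∀ i, g i ≤ μ.f i ∧ μ.f (i + 1) ≤ g i := fun i => by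
    by_cases hi : i ∈ S
    · have := hpos i hi; have := (hG i).2; simp only [g, hi, if_true]; omega
    · have : ¬ (i < N ∧ μ.f i < κ.f i) := fun h => hi (hFS (by simpa [forcedRows] using h))
      have := (hG i).1; have := hκ i
      simp only [g, hi, if_false]; omega
  let ρ := ofSuccLE g (fun i => (hg (i + 1)).1.trans (hg i).2) N fun n hn => by
    simp only [g, hκ n hn, Nat.zero_sub]
  refine ⟨ρ, hg, fun i => ?_⟩
  by_cases hi : i ∈ S
  · have := hpos i hi; simp only [ρ, ofSuccLE, g, hi, if_true]; omega
  · simp only [ρ, ofSuccLE, g, hi, if_false]; omega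

theorem ncard_upper_eq_card_supersets (hG : ∀ i, μ.f (i + 1) ≤ κ.f i ∧ κ.f i ≤ μ.f i + 1)
    (q : ℕ) :
    {ν : IntPartition | Prec true κ ν ∧ Prec false μ ν ∧ sizeF ν.f = sizeF μ.f + q}.ncard =
      #{S ∈ (upperRows κ μ).powerset | forcedRows κ μ ⊆ S ∧ #S = q} := by
  set N := sizeF κ.f + sizeF μ.f
  have hν : ∀ ν : IntPartition, Prec true κ ν → ∀ n, N + 1 ≤ n → ν.f n = 0 := fun ν h n hn => by
    obtain ⟨k, rfl⟩ : ∃ k, n = k + 1 := ⟨n - 1, by omega⟩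
    have := (h k).2; have := κ.eq_zero_of_sizeF_le (i := k) (by omega); omega
  rw [← Set.ncard_coe_finset]
  refine Set.ncard_congr (fun ν _ => {i ∈ range (N + 1) | μ.f i < ν.f i}) ?_ ?_ ?_
  · rintro ν ⟨hκν, hμν, hq⟩
    simp only [coe_filter, mem_powerset, Set.mem_ofPred_eq]
    refine ⟨?_, fun i hi => ?_, ?_⟩
    · rintro (_ | k) hk
      · exact zero_mem_upperRows κ μ
      · simp only [mem_filter, mem_range] at hk
        simp only [succ_mem_upperRows, lowerRows, mem_filter, mem_range]
        exact ⟨by omega, hk.2.trans_le (hκν k).2⟩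
    · simp only [forcedRows, mem_filter, mem_range] at hi ⊢
      exact ⟨by omega, hi.2.trans_le (hκν i).1⟩
    · have := sizeF_eq_sizeF_add_card (hν ν hκν) (prec_false_iff.mp hμν); omega
  · rintro ν ν' ⟨hκν, hμν, -⟩ ⟨hκν', hμν', -⟩ h
    refine f_injective (funext fun i => ?_)
    rw [eq_add_ite_mem_filter (hν ν hκν) (prec_false_iff.mp hμν) i,
      eq_add_ite_mem_filter (hν ν' hκν') (prec_false_iff.mp hμν') i, h]
  · intro S hS
    simp only [coe_filter, mem_powerset, Set.mem_ofPred_eq] at hS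
    obtain ⟨ν, hκν, hνS⟩ := exists_upper_of_subset hG hS.1 hS.2.1
    have hμν : ∀ i, μ.f i ≤ ν.f i ∧ ν.f i ≤ μ.f i + 1 := fun i => by
      rw [hνS]; split_ifs <;> omega
    have hfilter := filter_lt_eq_of_eq_add_ite (hS.1.trans (upperRows_subset_range κ μ)) hνS
    refine ⟨ν, ⟨hκν, prec_false_iff.mpr hμν, ?_⟩, hfilter⟩
    rw [sizeF_eq_sizeF_add_card (hν ν hκν) hμν, hfilter, hS.2.2]

theorem ncard_lower_eq_card_supersets (hG : ∀ i, μ.f (i + 1) ≤ κ.f i ∧ κ.f i ≤ μ.f i + 1)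
    (q : ℕ) :
    {ρ : IntPartition | Prec true ρ μ ∧ Prec false ρ κ ∧ sizeF κ.f = sizeF ρ.f + q}.ncard =
      #{S ∈ (lowerRows κ μ).powerset | forcedRows κ μ ⊆ S ∧ #S = q} := by
  set N := sizeF κ.f + sizeF μ.f
  have hκ : ∀ n, N ≤ n → κ.f n = 0 := fun n hn => κ.eq_zero_of_sizeF_le (by omega)
  rw [← Set.ncard_coe_finset]
  refine Set.ncard_congr (fun ρ _ => {i ∈ range N | ρ.f i < κ.f i}) ?_ ?_ ?_
  · rintro ρ ⟨hρμ, hρκ, hq⟩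
    simp only [coe_filter, mem_powerset, Set.mem_ofPred_eq]
    refine ⟨fun i hi => ?_, fun i hi => ?_, ?_⟩
    · simp only [mem_filter, mem_range, lowerRows] at hi ⊢
      exact ⟨hi.1, (hρμ i).2.trans_lt hi.2⟩
    · simp only [forcedRows, mem_filter, mem_range] at hi ⊢
      exact ⟨hi.1, (hρμ i).1.trans_lt hi.2⟩
    · have := sizeF_eq_sizeF_add_card hκ (prec_false_iff.mp hρκ); omega
  · rintro ρ ρ' ⟨-, hρκ, -⟩ ⟨-, hρκ', -⟩ h
    refine f_injective (funext fun i => ?_)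
    have := eq_add_ite_mem_filter hκ (prec_false_iff.mp hρκ) i
    have := eq_add_ite_mem_filter hκ (prec_false_iff.mp hρκ') i
    rw [h] at *
    omega
  · intro S hS
    simp only [coe_filter, mem_powerset, Set.mem_ofPred_eq] at hS
    obtain ⟨ρ, hρμ, hκS⟩ := exists_lower_of_subset hG hS.1 hS.2.1
    have hρκ : ∀ i, ρ.f i ≤ κ.f i ∧ κ.f i ≤ ρ.f i + 1 := fun i => by
      rw [hκS]; split_ifs <;> omega
    have hfilter := filter_lt_eq_of_eq_add_ite (hS.1.trans (filter_subset _ _)) hκS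
    refine ⟨ρ, ⟨hρμ, prec_false_iff.mpr hρκ, ?_⟩, hfilter⟩
    rw [sizeF_eq_sizeF_add_card hκ hρκ, hfilter, hS.2.2]

theorem plusMinusCoeff_true_false_of_eq_zero {p q : ℕ} (h : p = 0 ∨ q = 0) :
    plusMinusCoeff true false κ μ p q = minusPlusCoeff true false κ μ p q := by
  rcases h with rfl | rfl
  · refine Set.ncard_eq_ncard_of_subset_singleton (a := κ) (b := μ) ?_ ?_ (by simp [prec_refl])
    · rintro ν ⟨hκν, -, hp, -⟩
      exact (f_injective (eq_of_le_of_sizeF_eq ν.hasFiniteSupport (fun i => (hκν i).1)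
        (by omega))).symm
    · rintro ρ ⟨hρμ, -, hp, -⟩
      exact f_injective (eq_of_le_of_sizeF_eq μ.hasFiniteSupport (fun i => (hρμ i).1) (by omega))
  · refine Set.ncard_eq_ncard_of_subset_singleton (a := μ) (b := κ) ?_ ?_ (by simp [prec_refl])
    · rintro ν ⟨-, hμν, -, hq⟩
      exact (f_injective (eq_of_le_of_sizeF_eq ν.hasFiniteSupport
        (fun i => (prec_false_iff.mp hμν i).1) (by omega))).symm
    · rintro ρ ⟨-, hρκ, -, hq⟩
      exact f_injective (eq_of_le_of_sizeF_eq κ.hasFiniteSupport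
        (fun i => (prec_false_iff.mp hρκ i).1) (by omega))

theorem plusMinusCoeff_true_false_eq_ncard {p q : ℕ} (hC : sizeF μ.f + q = sizeF κ.f + p) :
    plusMinusCoeff true false κ μ p q =
      {ν : IntPartition | Prec true κ ν ∧ Prec false μ ν ∧ sizeF ν.f = sizeF μ.f + q}.ncard := by
  rw [plusMinusCoeff]
  congr 1; ext ν
  exact and_congr_right fun _ => and_congr_right fun _ => by omega

theorem minusPlusCoeff_true_false_eq_ncard {p q : ℕ} (hC : sizeF μ.f + q = sizeF κ.f + p) :
    minusPlusCoeff true false κ μ p q =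
      {ρ : IntPartition | Prec true ρ μ ∧ Prec false ρ κ ∧ sizeF κ.f = sizeF ρ.f + q}.ncard := by
  rw [minusPlusCoeff]
  congr 1; ext ρ
  exact and_congr_right fun _ => and_congr_right fun _ => by omega

theorem plusMinusCoeff_true_false (κ μ : IntPartition) (p q : ℕ) :
    plusMinusCoeff true false κ μ p q = minusPlusCoeff true false κ μ p q +
      if p = 0 ∨ q = 0 then 0 else minusPlusCoeff true false κ μ (p - 1) (q - 1) := by
  split_ifs with hpq
  · exact plusMinusCoeff_true_false_of_eq_zero hpq
  rw [not_or] at hpq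
  by_cases hC : sizeF μ.f + q = sizeF κ.f + p
  swap
  · rw [plusMinusCoeff_eq_zero _ _ hC, minusPlusCoeff_eq_zero _ _ hC,
      minusPlusCoeff_eq_zero _ _ (by omega)]
  rw [plusMinusCoeff_true_false_eq_ncard hC, minusPlusCoeff_true_false_eq_ncard hC,
    minusPlusCoeff_true_false_eq_ncard (p := p - 1) (q := q - 1) (by omega)]
  by_cases hG : ∀ i, μ.f (i + 1) ≤ κ.f i ∧ κ.f i ≤ μ.f i + 1
  · rw [ncard_upper_eq_card_supersets hG, ncard_lower_eq_card_supersets hG,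
      ncard_lower_eq_card_supersets hG]
    exact card_supersets_eq_add (forcedRows_subset_upperRows κ μ)
      (forcedRows_subset_lowerRows κ μ) (card_upperRows κ μ) hpq.2
  · have hν : ∀ ν : IntPartition,
        ¬ (Prec true κ ν ∧ Prec false μ ν ∧ sizeF ν.f = sizeF μ.f + q) := fun ν hν =>
      hG (compatible_of_upper hν.1 hν.2.1)
    have hρ : ∀ (ρ : IntPartition) (k : ℕ),
        ¬ (Prec true ρ μ ∧ Prec false ρ κ ∧ sizeF κ.f = sizeF ρ.f + k) := fun ρ _ hρ =>
      hG (compatible_of_lower hρ.1 hρ.2.1)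
    simp [hν, hρ]

end MixedType

/-- quasi-commutation of vertex operators,
`Γ_{a₁+}(x₁) Γ_{a₂-}(x₂) = z₁₂ Γ_{a₂-}(x₂) Γ_{a₁+}(x₁)` with `z₁₂ = (1-x₁x₂)⁻¹` if `a₁ = a₂`
and `z₁₂ = 1+x₁x₂` otherwise, stated as the equality of the coefficients of `x₁^p x₂^q` of the
matrix elements `⟨κ|·|μ⟩` of both sides (each coefficient is a count of intermediate
partitions). -/
theorem stmt8 (a₁ a₂ : Bool) (κ μ : IntPartition) (p q : ℕ) :
    Set.ncard {ν : IntPartition | Prec a₁ κ ν ∧ Prec a₂ μ ν ∧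
        sizeF ν.f = sizeF κ.f + p ∧ sizeF ν.f = sizeF μ.f + q} =
      (if a₁ = a₂ then
        ∑ j ∈ Finset.range (min p q + 1),
          Set.ncard {ρ : IntPartition | Prec a₁ ρ μ ∧ Prec a₂ ρ κ ∧
            sizeF μ.f = sizeF ρ.f + (p - j) ∧ sizeF κ.f = sizeF ρ.f + (q - j)}
      else
        Set.ncard {ρ : IntPartition | Prec a₁ ρ μ ∧ Prec a₂ ρ κ ∧
            sizeF μ.f = sizeF ρ.f + p ∧ sizeF κ.f = sizeF ρ.f + q} +
          if p = 0 ∨ q = 0 then 0 else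
            Set.ncard {ρ : IntPartition | Prec a₁ ρ μ ∧ Prec a₂ ρ κ ∧
              sizeF μ.f = sizeF ρ.f + (p - 1) ∧ sizeF κ.f = sizeF ρ.f + (q - 1)}) := by
  have hRR := plusMinusCoeff_true_true κ.conj μ.conj p q
  have hRL := plusMinusCoeff_true_false κ.conj μ.conj p q
  simp only [plusMinusCoeff_conj, minusPlusCoeff_conj, Bool.not_true, Bool.not_false] at hRR hRL
  cases a₁ <;> cases a₂
  · rw [if_pos rfl]; exact hRR
  · rw [if_neg (by decide)]; exact hRL
  · rw [if_neg (by decide)]; exact plusMinusCoeff_true_false κ μ p q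
  · rw [if_pos rfl]; exact plusMinusCoeff_true_true κ μ p q
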